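/- arXiv:1412.6734 — 3 statements merged into one kernel-verified Lean document; each statement's English description precedes it below -/
import Mathlib

section
/- Let k ≥ 2, α ∈ ℝ, and e, d ∈ ℝ^k, and set X = e dᵀ and M = (I − αX)(I − αX)ᵀ. Define λ⁺, λ⁻ = 1 + (α²‖e‖²‖d‖² − 2α⟨e,d⟩ ± α‖e‖‖d‖·√(α²‖e‖²‖d‖² + 4 − 4α⟨e,d⟩))/2 (the square root is real since α²‖e‖²‖d‖² + 4 − 4α⟨e,d⟩ ≥ 0). Then the characteristic polynomial of M equals (Y − 1)^{k−2} (Y − λ⁺)(Y − λ⁻); in particular M has k−2 eigenvalues equal to 1 and its remaining two eigenvalues are λ⁺ and λ⁻. -/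
/-!
Expanding the product, `M = 1 + N` with `N = e (α²‖d‖² e − α d)ᵀ + d (−α e)ᵀ`, a sum of two
outer products, so `N = A B` with `A = [e d]` of size `k × 2`. The characteristic polynomials
of `A B` and of the `2 × 2` matrix `B A` differ by the factor `Y^(k-2)`, hence
`χ_M(Y) = (Y - 1)^(k-2) χ_{BA}(Y - 1)`. The matrix `B A` has trace `α²‖e‖²‖d‖² − 2α⟨e,d⟩` and
determinant `α²(⟨e,d⟩² − ‖e‖²‖d‖²)`, so its eigenvalues are `λ± − 1`; Cauchy–Schwarz makes the
discriminant nonnegative.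
-/

open Matrix Polynomial

/-- The Euclidean norm of a vector in `ℝ^k`, `‖v‖ = √⟨v,v⟩`. -/
noncomputable def vecEnorm {k : ℕ} (v : Fin k → ℝ) : ℝ := Real.sqrt (v ⬝ᵥ v)

namespace Matrix

variable {R n : Type*} [CommRing R]

theorem vecMulVec_add_vecMulVec_eq_mul (u₁ u₂ v₁ v₂ : n → R) :
    vecMulVec u₁ v₁ + vecMulVec u₂ v₂ = (of fun i j => ![u₁ i, u₂ i] j) * of ![v₁, v₂] := by
  ext i j
  simp [vecMulVec_apply, mul_apply, Fin.sum_univ_two]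

theorem charpoly_fin_two_eq_of_trace_of_det [Nontrivial R] (N : Matrix (Fin 2) (Fin 2) R)
    (a b : R) (htr : N.trace = a + b) (hdet : N.det = a * b) :
    N.charpoly = (X - C a) * (X - C b) := by
  rw [charpoly_fin_two, htr, hdet, C_add, C_mul]
  ring

variable [Fintype n]

theorem of_mul_of_eq_fin_two_of (u₁ u₂ v₁ v₂ : n → R) :
    of ![v₁, v₂] * (of fun i j => ![u₁ i, u₂ i] j) =
      !![v₁ ⬝ᵥ u₁, v₁ ⬝ᵥ u₂; v₂ ⬝ᵥ u₁, v₂ ⬝ᵥ u₂] := by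
  ext a b
  fin_cases a <;> fin_cases b <;> rfl

variable [DecidableEq n]

theorem charpoly_one_add (N : Matrix n n R) : (1 + N).charpoly = N.charpoly.comp (X - 1) := by
  simpa [sub_eq_add_neg, add_comm] using charpoly_sub_scalar N (-1)

theorem charpoly_vecMulVec_add_vecMulVec (u₁ u₂ v₁ v₂ : n → R) (hn : 2 ≤ Fintype.card n) :
    (vecMulVec u₁ v₁ + vecMulVec u₂ v₂).charpoly =
      X ^ (Fintype.card n - 2) * !![v₁ ⬝ᵥ u₁, v₁ ⬝ᵥ u₂; v₂ ⬝ᵥ u₁, v₂ ⬝ᵥ u₂].charpoly := by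
  rw [vecMulVec_add_vecMulVec_eq_mul, charpoly_mul_comm_of_le _ _ (by simpa using hn),
    of_mul_of_eq_fin_two_of, Fintype.card_fin]

theorem one_sub_smul_vecMulVec_mul_transpose (α : R) (e d : n → R) :
    (1 - α • vecMulVec e d) * (1 - α • vecMulVec e d)ᵀ =
      1 + (vecMulVec e ((α ^ 2 * (d ⬝ᵥ d)) • e - α • d) + vecMulVec d (-α • e)) := by
  simp only [transpose_sub, transpose_one, transpose_smul, transpose_vecMulVec, sub_mul, mul_sub,
    one_mul, mul_one, smul_mul_smul_comm, vecMulVec_mul_vecMulVec, vecMulVec_sub, vecMulVec_smul,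
    neg_smul, vecMulVec_neg, smul_smul, sq]
  abel

end Matrix

theorem dotProduct_sq_le_dotProduct_self_mul {n : Type*} [Fintype n] (u v : n → ℝ) :
    (u ⬝ᵥ v) ^ 2 ≤ (u ⬝ᵥ u) * (v ⬝ᵥ v) := by
  simpa [dotProduct, sq] using Finset.sum_mul_sq_le_sq_mul_sq Finset.univ u v

theorem vecEnorm_sq {k : ℕ} (v : Fin k → ℝ) : vecEnorm v ^ 2 = v ⬝ᵥ v :=
  Real.sq_sqrt (Finset.sum_nonneg fun i _ => mul_self_nonneg (v i))

theorem charpoly_td_lambda (k : ℕ) (hk : 2 ≤ k) (α : ℝ) (e d : Fin k → ℝ)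
    (Xm M : Matrix (Fin k) (Fin k) ℝ)
    (hX : Xm = Matrix.vecMulVec e d)
    (hM : M = (1 - α • Xm) * (1 - α • Xm)ᵀ)
    (lp lm : ℝ)
    (hlp : lp = 1 + (α ^ 2 * vecEnorm e ^ 2 * vecEnorm d ^ 2 - 2 * α * (e ⬝ᵥ d) +
        α * vecEnorm e * vecEnorm d *
          Real.sqrt (α ^ 2 * vecEnorm e ^ 2 * vecEnorm d ^ 2 + 4 - 4 * α * (e ⬝ᵥ d))) / 2)
    (hlm : lm = 1 + (α ^ 2 * vecEnorm e ^ 2 * vecEnorm d ^ 2 - 2 * α * (e ⬝ᵥ d) -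
        α * vecEnorm e * vecEnorm d *
          Real.sqrt (α ^ 2 * vecEnorm e ^ 2 * vecEnorm d ^ 2 + 4 - 4 * α * (e ⬝ᵥ d))) / 2) :
    M.charpoly = (X - 1) ^ (k - 2) * ((X - C lp) * (X - C lm)) := by
  have hsq : Real.sqrt (α ^ 2 * vecEnorm e ^ 2 * vecEnorm d ^ 2 + 4 - 4 * α * (e ⬝ᵥ d)) ^ 2 =
      α ^ 2 * vecEnorm e ^ 2 * vecEnorm d ^ 2 + 4 - 4 * α * (e ⬝ᵥ d) := by
    refine Real.sq_sqrt ?_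
    rw [vecEnorm_sq, vecEnorm_sq]
    nlinarith [dotProduct_sq_le_dotProduct_self_mul e d, sq_nonneg (α * (e ⬝ᵥ d) - 2), sq_nonneg α]
  subst hX hM
  rw [one_sub_smul_vecMulVec_mul_transpose, charpoly_one_add,
    charpoly_vecMulVec_add_vecMulVec _ _ _ _ (by simpa using hk), Fintype.card_fin,
    charpoly_fin_two_eq_of_trace_of_det _ (lp - 1) (lm - 1)]
  · simp only [mul_comp, X_pow_comp, X_comp, sub_comp, C_comp, one_comp, C_sub, C_1]
    ring
  · simp only [trace_fin_two_of, sub_dotProduct, smul_dotProduct, smul_eq_mul, dotProduct_comm d e]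
    rw [hlp, hlm, vecEnorm_sq, vecEnorm_sq]
    ring
  · simp only [det_fin_two_of, sub_dotProduct, smul_dotProduct, smul_eq_mul, dotProduct_comm d e]
    rw [hlp, hlm]
    linear_combination (α ^ 2 * vecEnorm e ^ 2 * vecEnorm d ^ 2 / 4) * hsq
      + α ^ 2 * vecEnorm e ^ 2 * vecEnorm_sq d + α ^ 2 * (d ⬝ᵥ d) * vecEnorm_sq e
end

section
/- Let α ≥ 0, γ, λ, r ∈ ℝ and w, e, e₋, φ' ∈ ℝ^k. Define w' = (I − (α/(1 + α‖e‖²)) e eᵀ)·(w + α(r + γ⟨φ', w⟩ + γλ⟨e₋, w⟩) e). Then w' satisfies the implicit TD(λ) equation w' = w + α (r + γ⟨φ', w⟩ + γλ⟨e₋, w⟩ − ⟨e, w'⟩) e. -/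
open Matrix

/-- The Euclidean norm of a vector in `ℝ^k`, `‖v‖ = √⟨v,v⟩`. -/
noncomputable def euclidNorm {k : ℕ} (v : Fin k → ℝ) : ℝ := Real.sqrt (v ⬝ᵥ v)

/-!
The matrix `I - (α / (1 + α ‖e‖²)) e eᵀ` is, by the Sherman–Morrison formula, the inverse of
`I + α e eᵀ`, and `α ≥ 0` keeps `1 + α ‖e‖²` away from zero. Hence `w'` solves
`w' + α ⟨e, w'⟩ e = w + α (r + γ⟨φ', w⟩ + γλ⟨e₋, w⟩) e`, and moving `α ⟨e, w'⟩ e` to the right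
gives the implicit equation.
-/

section ShermanMorrison

variable {K n : Type*} [Field K] [Fintype n] [DecidableEq n]

theorem one_add_smul_vecMulVec_mulVec (α : K) (u v x : n → K) :
    (1 + α • vecMulVec u v) *ᵥ x = x + (α * (v ⬝ᵥ x)) • u := by
  rw [add_mulVec, one_mulVec, smul_mulVec, vecMulVec_mulVec, op_smul_eq_smul, smul_smul]

theorem one_add_smul_vecMulVec_mul_one_sub_smul_vecMulVec (α : K) (u v : n → K)
    (h : 1 + α * (v ⬝ᵥ u) ≠ 0) :
    (1 + α • vecMulVec u v) * (1 - (α / (1 + α * (v ⬝ᵥ u))) • vecMulVec u v) = 1 := by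
  set c := α / (1 + α * (v ⬝ᵥ u))
  have hc : α - c - α * c * (v ⬝ᵥ u) = 0 := by
    simp only [c]; field_simp; ring
  have hsq : vecMulVec u v * vecMulVec u v = (v ⬝ᵥ u) • vecMulVec u v := by
    rw [vecMulVec_mul_vecMulVec, vecMulVec_smul]
  calc (1 + α • vecMulVec u v) * (1 - c • vecMulVec u v)
      = 1 + (α - c - α * c * (v ⬝ᵥ u)) • vecMulVec u v := by
        simp only [add_mul, mul_sub, one_mul, mul_one, smul_mul_smul_comm, hsq, smul_smul,
          sub_smul]
        abel
    _ = 1 := by rw [hc, zero_smul, add_zero]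

end ShermanMorrison

theorem euclidNorm_sq {k : ℕ} (v : Fin k → ℝ) : euclidNorm v ^ 2 = v ⬝ᵥ v :=
  Real.sq_sqrt (by simpa using dotProduct_self_star_nonneg v)

theorem implicit_td_update_solves_implicit_equation (k : ℕ) (α : ℝ) (hα : 0 ≤ α)
    (γ lam r : ℝ) (w e em φ' : Fin k → ℝ) (w' : Fin k → ℝ)
    (hw' : w' =
      ((1 : Matrix (Fin k) (Fin k) ℝ) -
          (α / (1 + α * euclidNorm e ^ 2)) • Matrix.vecMulVec e e).mulVec
        (w + (α * (r + γ * (φ' ⬝ᵥ w) + γ * lam * (em ⬝ᵥ w))) • e)) :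
    w' = w + (α * (r + γ * (φ' ⬝ᵥ w) + γ * lam * (em ⬝ᵥ w) - e ⬝ᵥ w')) • e := by
  set c := α * (r + γ * (φ' ⬝ᵥ w) + γ * lam * (em ⬝ᵥ w))
  have hden : 1 + α * (e ⬝ᵥ e) ≠ 0 := by
    have := sq_nonneg (euclidNorm e)
    rw [euclidNorm_sq] at this
    positivity
  have hsolve : w' + (α * (e ⬝ᵥ w')) • e = w + c • e := by
    rw [← one_add_smul_vecMulVec_mulVec, hw', euclidNorm_sq, mulVec_mulVec,
      one_add_smul_vecMulVec_mul_one_sub_smul_vecMulVec α e e hden, one_mulVec]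
  calc w' = w + c • e - (α * (e ⬝ᵥ w')) • e := eq_sub_of_add_eq hsolve
    _ = _ := by rw [mul_sub, sub_smul, add_sub_assoc]
end

section
/- Let k ≥ 3, α ≥ 0, and e, d ∈ ℝ^k. Set Q = (I + α e eᵀ)⁻¹, X = e dᵀ, and β = 1 − α‖e‖²/(1 + α‖e‖²). Define λ^{im,+} = 1 + (α²β²‖e‖²‖d‖² − 2αβ⟨e,d⟩ + αβ‖e‖‖d‖·√(α²β²‖e‖²‖d‖² + 4 − 4αβ⟨e,d⟩))/2. Then the ℓ²-operator norm of the matrix I − α Q X satisfies ‖I − αQX‖₂ = √(max{λ^{im,+}, 1}). -/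
/-! Since `(I + α e eᵀ)⁻¹ e = β e` (Sherman–Morrison), `I - α Q X = I - γ e dᵀ` with `γ = α β ≥ 0`.
For `T = I - γ e dᵀ` one has `‖T y‖² = ‖y‖² + 2 ⟪d, y⟫ ⟪w, y⟫` with `w = (γ² ‖e‖² / 2) d - γ e`,
and the largest eigenvalue of the rank-two form `y ↦ 2 ⟪d, y⟫ ⟪w, y⟫` is `⟪d, w⟫ + ‖d‖ ‖w‖ ≥ 0`,
attained at `‖w‖ d + ‖d‖ w`, or on `d^⊥` when it vanishes. Expanding
`‖w‖` gives `⟪d, w⟫ + ‖d‖ ‖w‖ = λ^{im,+} - 1`. -/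

open Matrix

/-- The Euclidean norm of a vector in `ℝ^k`, `‖v‖ = √⟨v,v⟩`. -/
noncomputable def euclNorm {k : ℕ} (v : Fin k → ℝ) : ℝ := Real.sqrt (v ⬝ᵥ v)

/-- The ℓ²-operator norm of a `k × k` real matrix: the operator norm induced by the
Euclidean norm on `ℝ^k`. -/
noncomputable def l2OpNorm {k : ℕ} (A : Matrix (Fin k) (Fin k) ℝ) : ℝ :=
  ‖Matrix.toEuclideanCLM (𝕜 := ℝ) A‖

open RealInnerProductSpace Module InnerProductSpace

theorem ContinuousLinearMap.opNorm_eq_sqrt_of_norm_sq_le_of_eq {𝕜 E F : Type*}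
    [NontriviallyNormedField 𝕜] [NormedAddCommGroup E] [NormedSpace 𝕜 E]
    [SeminormedAddCommGroup F] [NormedSpace 𝕜 F] {T : E →L[𝕜] F} {M : ℝ}
    (hle : ∀ x, ‖T x‖ ^ 2 ≤ M * ‖x‖ ^ 2) {x₀ : E} (hx₀ : x₀ ≠ 0)
    (heq : ‖T x₀‖ ^ 2 = M * ‖x₀‖ ^ 2) : ‖T‖ = √M := by
  have hx₀' : 0 < ‖x₀‖ := norm_pos_iff.2 hx₀
  have hM : 0 ≤ M := (mul_nonneg_iff_of_pos_right (by positivity)).1 (heq ▸ sq_nonneg _)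
  have hsqrt : ∀ x : E, √(M * ‖x‖ ^ 2) = √M * ‖x‖ := fun x => by
    rw [Real.sqrt_mul hM, Real.sqrt_sq (norm_nonneg x)]
  refine opNorm_eq_of_bounds (Real.sqrt_nonneg M) (fun x => ?_) fun N _ hN => ?_
  · rw [← hsqrt]
    exact Real.le_sqrt_of_sq_le (hle x)
  · have h := hN x₀
    rwa [← Real.sqrt_sq (norm_nonneg (T x₀)), heq, hsqrt, mul_le_mul_iff_left₀ hx₀'] at h

section InnerProductSpace

variable {E : Type*} [NormedAddCommGroup E] [InnerProductSpace ℝ E]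

theorem real_two_mul_inner_mul_inner_le (u v y : E) :
    2 * ⟪u, y⟫ * ⟪v, y⟫ ≤ (⟪u, v⟫ + ‖u‖ * ‖v‖) * ‖y‖ ^ 2 := by
  rcases eq_or_ne u 0 with rfl | hu
  · simp
  rcases eq_or_ne v 0 with rfl | hv
  · simp
  have hr : 0 < ‖u‖ * ‖v‖ := by positivity
  -- `‖v‖ • u` and `‖u‖ • v` have equal norms, so polarization turns the product into a
  -- difference of squares whose positive part is bounded by Cauchy–Schwarz.
  have hcs : ⟪‖v‖ • u + ‖u‖ • v, y⟫ ^ 2 ≤ ‖‖v‖ • u + ‖u‖ • v‖ ^ 2 * ‖y‖ ^ 2 := by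
    rw [← mul_pow]
    exact sq_le_sq' (abs_le.1 (abs_real_inner_le_norm _ _)).1
      (abs_le.1 (abs_real_inner_le_norm _ _)).2
  have hsq : ‖‖v‖ • u + ‖u‖ • v‖ ^ 2 = 2 * (‖u‖ * ‖v‖) * (⟪u, v⟫ + ‖u‖ * ‖v‖) := by
    rw [norm_add_sq_real, norm_smul, norm_smul, real_inner_smul_left, real_inner_smul_right]
    simp only [Real.norm_eq_abs, abs_norm]
    ring
  rw [hsq, inner_add_left, real_inner_smul_left, real_inner_smul_left] at hcs
  have hdiff := sq_nonneg (‖v‖ * ⟪u, y⟫ - ‖u‖ * ⟪v, y⟫)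
  refine le_of_mul_le_mul_left ?_ hr
  linarith

theorem exists_ne_zero_real_inner_eq_zero (hE : 2 ≤ finrank ℝ E) (u : E) :
    ∃ y ≠ (0 : E), ⟪u, y⟫ = 0 := by
  have : FiniteDimensional ℝ E := Module.finite_of_finrank_pos (by omega)
  have hker : LinearMap.ker (innerₛₗ ℝ u) ≠ ⊥ :=
    LinearMap.ker_ne_bot_of_finrank_lt (by rw [Module.finrank_self]; omega)
  obtain ⟨y, hy, hy0⟩ := (Submodule.ne_bot_iff _).1 hker
  exact ⟨y, hy0, hy⟩

theorem exists_ne_zero_real_two_mul_inner_mul_inner_eq (hE : 2 ≤ finrank ℝ E) (u v : E) :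
    ∃ y ≠ (0 : E), 2 * ⟪u, y⟫ * ⟪v, y⟫ = (⟪u, v⟫ + ‖u‖ * ‖v‖) * ‖y‖ ^ 2 := by
  by_cases h : ⟪u, v⟫ + ‖u‖ * ‖v‖ = 0
  · obtain ⟨y, hy0, hy⟩ := exists_ne_zero_real_inner_eq_zero hE u
    exact ⟨y, hy0, by simp [hy, h]⟩
  have hu : ⟪u, ‖v‖ • u + ‖u‖ • v⟫ = ‖u‖ * (⟪u, v⟫ + ‖u‖ * ‖v‖) := by
    rw [inner_add_right, real_inner_smul_right, real_inner_smul_right, real_inner_self_eq_norm_sq]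
    ring
  have hv : ⟪v, ‖v‖ • u + ‖u‖ • v⟫ = ‖v‖ * (⟪u, v⟫ + ‖u‖ * ‖v‖) := by
    rw [inner_add_right, real_inner_smul_right, real_inner_smul_right, real_inner_self_eq_norm_sq,
      real_inner_comm]
    ring
  have hy : ‖‖v‖ • u + ‖u‖ • v‖ ^ 2 = 2 * (‖u‖ * ‖v‖) * (⟪u, v⟫ + ‖u‖ * ‖v‖) := by
    rw [norm_add_sq_real, norm_smul, norm_smul, real_inner_smul_left, real_inner_smul_right]
    simp only [Real.norm_eq_abs, abs_norm]
    ring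
  refine ⟨‖v‖ • u + ‖u‖ • v, fun h0 => h ?_, ?_⟩
  · have hc := abs_le.1 (abs_real_inner_le_norm u v)
    have h2 : 2 * (‖u‖ * ‖v‖) * (⟪u, v⟫ + ‖u‖ * ‖v‖) = 0 := by rw [← hy, h0, norm_zero]; ring
    rcases mul_eq_zero.1 h2 with hr | hr
    · linarith
    · exact hr
  · rw [hu, hv, hy]
    ring

theorem ContinuousLinearMap.opNorm_eq_sqrt_of_norm_sq_apply (hE : 2 ≤ finrank ℝ E)
    {T : E →L[ℝ] E} {u v : E} (hT : ∀ y, ‖T y‖ ^ 2 = ‖y‖ ^ 2 + 2 * ⟪u, y⟫ * ⟪v, y⟫) :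
    ‖T‖ = √(1 + (⟪u, v⟫ + ‖u‖ * ‖v‖)) := by
  obtain ⟨y₀, hy₀, heq⟩ := exists_ne_zero_real_two_mul_inner_mul_inner_eq hE u v
  refine opNorm_eq_sqrt_of_norm_sq_le_of_eq (fun y => ?_) hy₀ ?_
  · rw [hT]
    linarith [real_two_mul_inner_mul_inner_le u v y]
  · rw [hT, heq]
    ring

theorem norm_sq_one_sub_smul_rankOne_apply (γ : ℝ) (e d y : E) :
    ‖(1 - γ • rankOne ℝ e d) y‖ ^ 2 =
      ‖y‖ ^ 2 + 2 * ⟪d, y⟫ * ⟪(γ ^ 2 * ‖e‖ ^ 2 / 2) • d - γ • e, y⟫ := by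
  rw [_root_.sub_apply, one_apply_eq_self, _root_.smul_apply, rankOne_apply, smul_smul,
    norm_sub_sq_real, norm_smul, real_inner_smul_right, inner_sub_left, real_inner_smul_left,
    real_inner_smul_left, real_inner_comm e y, Real.norm_eq_abs, mul_pow, sq_abs]
  ring

theorem real_inner_add_norm_mul_norm_smul_sub_smul {γ : ℝ} (hγ : 0 ≤ γ) (e d : E) :
    ⟪d, (γ ^ 2 * ‖e‖ ^ 2 / 2) • d - γ • e⟫ + ‖d‖ * ‖(γ ^ 2 * ‖e‖ ^ 2 / 2) • d - γ • e‖ =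
      (γ ^ 2 * ‖e‖ ^ 2 * ‖d‖ ^ 2 - 2 * γ * ⟪e, d⟫ + γ * ‖e‖ * ‖d‖ *
        √(γ ^ 2 * ‖e‖ ^ 2 * ‖d‖ ^ 2 + 4 - 4 * γ * ⟪e, d⟫)) / 2 := by
  set w := (γ ^ 2 * ‖e‖ ^ 2 / 2) • d - γ • e
  have hinner : ⟪d, w⟫ = γ ^ 2 * ‖e‖ ^ 2 * ‖d‖ ^ 2 / 2 - γ * ⟪e, d⟫ := by
    rw [inner_sub_right, real_inner_smul_right, real_inner_smul_right, real_inner_self_eq_norm_sq,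
      real_inner_comm]
    ring
  have hw : ‖w‖ ^ 2 = (γ * ‖e‖ / 2) ^ 2 * (γ ^ 2 * ‖e‖ ^ 2 * ‖d‖ ^ 2 + 4 - 4 * γ * ⟪e, d⟫) := by
    rw [norm_sub_sq_real, norm_smul, norm_smul, real_inner_smul_left, real_inner_smul_right,
      real_inner_comm, Real.norm_eq_abs, Real.norm_eq_abs, abs_of_nonneg hγ,
      abs_of_nonneg (by positivity)]
    ring
  have hnorm : ‖w‖ = γ * ‖e‖ / 2 * √(γ ^ 2 * ‖e‖ ^ 2 * ‖d‖ ^ 2 + 4 - 4 * γ * ⟪e, d⟫) := by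
    rw [← Real.sqrt_sq (norm_nonneg w), hw, Real.sqrt_mul (sq_nonneg _),
      Real.sqrt_sq (by positivity)]
  rw [hinner, hnorm]
  ring

end InnerProductSpace

theorem Matrix.inv_one_add_smul_vecMulVec_self {n K : Type*} [Fintype n] [DecidableEq n] [Field K]
    {α : K} {e : n → K} (h : 1 + α * (e ⬝ᵥ e) ≠ 0) :
    (1 + α • vecMulVec e e)⁻¹ = 1 - (α / (1 + α * (e ⬝ᵥ e))) • vecMulVec e e := by
  refine inv_eq_right_inv ?_
  rw [mul_sub, mul_one, add_mul, one_mul, smul_mul_smul_comm, vecMulVec_mul_vecMulVec,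
    vecMulVec_smul]
  match_scalars
  · field_simp
  · field_simp; ring

theorem Matrix.toEuclideanCLM_vecMulVec {n : Type*} [Fintype n] [DecidableEq n] (u v : n → ℝ) :
    toEuclideanCLM (𝕜 := ℝ) (vecMulVec u v) = rankOne ℝ (WithLp.toLp 2 u) (WithLp.toLp 2 v) := by
  ext1 x
  rw [← WithLp.toLp_ofLp 2 x, toEuclideanCLM_toLp, rankOne_apply, EuclideanSpace.inner_toLp_toLp,
    vecMulVec_mulVec]
  simp [dotProduct_comm]

theorem euclNorm_eq_norm_toLp {k : ℕ} (v : Fin k → ℝ) : euclNorm v = ‖WithLp.toLp 2 v‖ := by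
  rw [euclNorm, ← Real.sqrt_sq (norm_nonneg _), ← real_inner_self_eq_norm_sq,
    EuclideanSpace.inner_toLp_toLp, star_trivial]

theorem dotProduct_eq_inner_toLp {k : ℕ} (u v : Fin k → ℝ) :
    u ⬝ᵥ v = ⟪WithLp.toLp 2 u, WithLp.toLp 2 v⟫ := by
  rw [EuclideanSpace.inner_toLp_toLp, star_trivial, dotProduct_comm]

theorem opNorm_implicit_td_lambda (k : ℕ) (hk : 3 ≤ k) (α : ℝ) (hα : 0 ≤ α)
    (e d : Fin k → ℝ)
    (Q Xm : Matrix (Fin k) (Fin k) ℝ)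
    (hQ : Q = ((1 : Matrix (Fin k) (Fin k) ℝ) + α • Matrix.vecMulVec e e)⁻¹)
    (hX : Xm = Matrix.vecMulVec e d)
    (β : ℝ) (hβ : β = 1 - α * euclNorm e ^ 2 / (1 + α * euclNorm e ^ 2))
    (lp : ℝ)
    (hlp : lp = 1 + (α ^ 2 * β ^ 2 * euclNorm e ^ 2 * euclNorm d ^ 2 - 2 * α * β * (e ⬝ᵥ d) +
        α * β * euclNorm e * euclNorm d *
          Real.sqrt (α ^ 2 * β ^ 2 * euclNorm e ^ 2 * euclNorm d ^ 2 + 4 - 4 * α * β * (e ⬝ᵥ d))) / 2) :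
    l2OpNorm (1 - α • (Q * Xm)) = Real.sqrt (max lp 1) := by
  have hee : e ⬝ᵥ e = euclNorm e ^ 2 := by
    rw [euclNorm_eq_norm_toLp, dotProduct_eq_inner_toLp, real_inner_self_eq_norm_sq]
  have hden : 0 < 1 + α * euclNorm e ^ 2 := by positivity
  have hβ0 : 0 ≤ β := by
    rw [hβ, sub_nonneg]
    exact div_le_one_of_le₀ (by linarith) hden.le
  have hQX : Q * Xm = β • vecMulVec e d := by
    rw [hQ, hX, inv_one_add_smul_vecMulVec_self (hee ▸ hden.ne'), sub_mul, one_mul, smul_mul,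
      vecMulVec_mul_vecMulVec, vecMulVec_smul, hβ, hee]
    match_scalars
    ring
  rw [euclNorm_eq_norm_toLp e, euclNorm_eq_norm_toLp d, dotProduct_eq_inner_toLp] at hlp
  set u := WithLp.toLp 2 e
  set v := WithLp.toLp 2 d
  set w := ((α * β) ^ 2 * ‖u‖ ^ 2 / 2) • v - (α * β) • u
  have hlp' : lp = 1 + (⟪v, w⟫ + ‖v‖ * ‖w‖) := by
    rw [real_inner_add_norm_mul_norm_smul_sub_smul (mul_nonneg hα hβ0), hlp]
    ring_nf
  have hE : 2 ≤ finrank ℝ (EuclideanSpace ℝ (Fin k)) := by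
    rw [finrank_euclideanSpace_fin]
    omega
  rw [l2OpNorm, hQX, smul_smul, map_sub, map_one, map_smul, toEuclideanCLM_vecMulVec,
    ContinuousLinearMap.opNorm_eq_sqrt_of_norm_sq_apply hE
      (norm_sq_one_sub_smul_rankOne_apply _ _ _), ← hlp',
    max_eq_left (by linarith [abs_le.1 (abs_real_inner_le_norm v w)])]
end
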